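/- (Location of the Bayesian-optimal one-stage selection relative to demographic parity.) For x in the feasible set X = {x ∈ (0,1) : (α₁ − p_A x)/p_B ∈ (0,1)}, let t_A(x), t_B(x) be the unique reals with Φ^c(t_A(x)) = x and Φ^c(t_B(x)) = (α₁ − p_A x)/p_B, and define N(x) = p_A·φ(t_A(x))/s_A + p_B·φ(t_B(x))/s_B. If α₁ < 1/2 then N is strictly decreasing on X ∩ [α₁, 1), and every maximizer x* of N over X satisfies x* < α₁; if α₁ > 1/2 then N is strictly increasing on X ∩ (0, α₁], and every maximizer x* of N over X satisfies x* > α₁. (The Bayesian-optimal selection picks the high-variance group A at a rate strictly below α₁ when α₁ < 1/2 and strictly above α₁ when α₁ > 1/2.) -/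

import Mathlib

open MeasureTheory Set

/-- Standard normal density. -/
noncomputable def phi (t : ℝ) : ℝ := Real.exp (-t ^ 2 / 2) / Real.sqrt (2 * Real.pi)

/-- Standard normal CDF. -/
noncomputable def Phi (t : ℝ) : ℝ := ∫ u in Set.Iic t, phi u

/-- Standard normal complementary CDF. -/
noncomputable def Phic (t : ℝ) : ℝ := 1 - Phi t

/-- Feasible first-stage selection fractions `x` for group `A`
(with `p_B = 1 - p_A`). -/
def feas (pA α₁ : ℝ) : Set ℝ :=
  {x : ℝ | x ∈ Set.Ioo (0 : ℝ) 1 ∧ (α₁ - pA * x) / (1 - pA) ∈ Set.Ioo (0 : ℝ) 1}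

/-- `N(x) = p_A φ(t_A(x))/s_A + p_B φ(t_B(x))/s_B`, where `t_A(x), t_B(x)` are
the standardized thresholds selecting fractions `x` and `(α₁ - p_A x)/p_B`. -/
noncomputable def Nfun (σW σA σB pA : ℝ) (tA tB : ℝ → ℝ) (x : ℝ) : ℝ :=
  pA * phi (tA x) / Real.sqrt (σW ^ 2 + σA ^ 2)
    + (1 - pA) * phi (tB x) / Real.sqrt (σW ^ 2 + σB ^ 2)

/-! Cauchy's mean value theorem for `φ` and `Φᶜ` (with `φ' = -t φ` and `(Φᶜ)' = -φ`) gives, for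
feasible `x₁ < x₂`, `N(x₁) - N(x₂) = p_A (x₂ - x₁) (η / s_B - ξ / s_A)` with `ξ < t_A(x₁)` and
`η > t_B(x₁)`. So `N` decreases to the right of any `x₁` with `t_A(x₁) / s_A ≤ t_B(x₁) / s_B`.
If `α₁ < 1/2`, the parity threshold `t₀ = t_A(α₁)` is positive, and for `x ≥ α₁` we have
`t_A(x) ≤ t₀ ≤ t_B(x)`; since `s_B < s_A` the criterion holds. It also holds, by continuity, at
points slightly left of `α₁`, so parity itself is not optimal. The case `α₁ > 1/2` is the mirror
image under `x ↦ 1 - x`, `t ↦ -t`, by the symmetry of `φ`. -/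

open Filter Topology

lemma phi_eq_gaussianPDFReal : phi = ProbabilityTheory.gaussianPDFReal 0 1 := by
  funext t
  simp [phi, ProbabilityTheory.gaussianPDFReal, div_eq_inv_mul]

lemma phi_pos (t : ℝ) : 0 < phi t := by
  rw [phi_eq_gaussianPDFReal]
  exact ProbabilityTheory.gaussianPDFReal_pos _ _ _ one_ne_zero

lemma integrable_phi : Integrable phi := by
  rw [phi_eq_gaussianPDFReal]
  exact ProbabilityTheory.integrable_gaussianPDFReal _ _

lemma integral_phi : ∫ t, phi t = 1 := by
  rw [phi_eq_gaussianPDFReal]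
  exact ProbabilityTheory.integral_gaussianPDFReal_eq_one _ one_ne_zero

lemma phi_neg (t : ℝ) : phi (-t) = phi t := by
  simp [phi]

lemma continuous_phi : Continuous phi := by
  unfold phi
  fun_prop

lemma hasDerivAt_phi (t : ℝ) : HasDerivAt phi (-(t * phi t)) t := by
  have h : HasDerivAt (fun u : ℝ => -u ^ 2 / 2) (-t) t :=
    ((hasDerivAt_pow 2 t).neg.div_const 2).congr_deriv (by ring)
  unfold phi
  exact (h.exp.div_const _).congr_deriv (by ring)

lemma Phic_eq_integral_Ioi (t : ℝ) : Phic t = ∫ u in Ioi t, phi u := by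
  rw [Phic, Phi, ← integral_phi,
    ← intervalIntegral.integral_Iic_add_Ioi integrable_phi.integrableOn integrable_phi.integrableOn]
  ring

lemma Phic_neg (t : ℝ) : Phic (-t) = 1 - Phic t := by
  rw [Phic_eq_integral_Ioi, ← integral_comp_neg_Iic]
  simp only [phi_neg, Phic, Phi, sub_sub_cancel]

lemma Phic_zero : Phic 0 = 1 / 2 := by
  have h := Phic_neg 0
  rw [neg_zero] at h
  linarith

lemma Phic_pos (t : ℝ) : 0 < Phic t := by
  rw [Phic_eq_integral_Ioi, setIntegral_pos_iff_support_of_nonneg_ae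
    (ae_of_all _ fun u => (phi_pos u).le) integrable_phi.integrableOn,
    Function.support_eq_univ fun u => (phi_pos u).ne']
  simp

lemma Phic_lt_one (t : ℝ) : Phic t < 1 := by
  have h := Phic_neg (-t)
  rw [neg_neg] at h
  linarith [Phic_pos (-t)]

lemma hasDerivAt_Phic (t : ℝ) : HasDerivAt Phic (-phi t) t := by
  have h : Phic = fun s => Phic 0 - ∫ u in (0)..s, phi u := by
    funext s
    rw [← intervalIntegral.integral_Iic_sub_Iic integrable_phi.integrableOn
      integrable_phi.integrableOn]
    simp only [Phic, Phi]
    ring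
  rw [h]
  exact ((continuous_phi.integral_hasStrictDerivAt 0 t).hasDerivAt).const_sub _

@[fun_prop]
lemma continuous_Phic : Continuous Phic :=
  continuous_iff_continuousAt.2 fun t => (hasDerivAt_Phic t).continuousAt

lemma Phic_strictAnti : StrictAnti Phic :=
  strictAnti_of_hasDerivAt_neg hasDerivAt_Phic fun t => neg_lt_zero.2 (phi_pos t)

lemma exists_phi_sub_eq_mul_Phic_sub {a b : ℝ} (hab : a < b) :
    ∃ ξ ∈ Ioo a b, phi a - phi b = ξ * (Phic a - Phic b) := by
  obtain ⟨ξ, hξ, h⟩ := exists_ratio_hasDerivAt_eq_ratio_slope phi _ hab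
    continuous_phi.continuousOn (fun t _ => hasDerivAt_phi t) Phic _
    continuous_Phic.continuousOn (fun t _ => hasDerivAt_Phic t)
  refine ⟨ξ, hξ, mul_right_cancel₀ (phi_pos ξ).ne' ?_⟩
  linear_combination -h

lemma sqrt_add_sq_lt_sqrt_add_sq (c : ℝ) {a b : ℝ} (ha : 0 ≤ a) (hab : a < b) :
    √(c ^ 2 + a ^ 2) < √(c ^ 2 + b ^ 2) :=
  Real.sqrt_lt_sqrt (by positivity) (by gcongr)

section Model

variable {σW σA σB pA α₁ : ℝ} {tA tB : ℝ → ℝ}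

lemma div_one_sub_self (hpA : pA ≠ 1) : (α₁ - pA * α₁) / (1 - pA) = α₁ := by
  field_simp [sub_ne_zero.2 hpA.symm]

lemma div_one_sub_le_self_iff (hpA : pA ∈ Ioo 0 1) {x : ℝ} :
    (α₁ - pA * x) / (1 - pA) ≤ α₁ ↔ α₁ ≤ x := by
  rw [div_le_iff₀ (sub_pos.2 hpA.2)]
  constructor <;> intro h <;> nlinarith [hpA.1]

lemma self_lt_div_one_sub_iff (hpA : pA ∈ Ioo 0 1) {x : ℝ} :
    α₁ < (α₁ - pA * x) / (1 - pA) ↔ x < α₁ := by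
  simpa only [not_le] using (div_one_sub_le_self_iff hpA).not

lemma mem_feas_self (hpA : pA ≠ 1) (hα : α₁ ∈ Ioo 0 1) : α₁ ∈ feas pA α₁ :=
  ⟨hα, by rwa [div_one_sub_self hpA]⟩

lemma Nfun_lt_Nfun_of_div_le_div (hσW : 0 < σW) (hpA : pA ∈ Ioo 0 1)
    (htA : ∀ x ∈ feas pA α₁, Phic (tA x) = x)
    (htB : ∀ x ∈ feas pA α₁, Phic (tB x) = (α₁ - pA * x) / (1 - pA))
    {x₁ x₂ : ℝ} (hx₁ : x₁ ∈ feas pA α₁) (hx₂ : x₂ ∈ feas pA α₁) (h₁₂ : x₁ < x₂)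
    (h : tA x₁ / √(σW ^ 2 + σA ^ 2) ≤ tB x₁ / √(σW ^ 2 + σB ^ 2)) :
    Nfun σW σA σB pA tA tB x₂ < Nfun σW σA σB pA tA tB x₁ := by
  obtain ⟨hpA₀, hpA₁⟩ := hpA
  have hpB : 0 < 1 - pA := sub_pos.2 hpA₁
  simp only [Nfun]
  set sA := √(σW ^ 2 + σA ^ 2)
  set sB := √(σW ^ 2 + σB ^ 2)
  have hsA : 0 < sA := by positivity
  have hsB : 0 < sB := by positivity
  have hA : tA x₂ < tA x₁ := Phic_strictAnti.lt_iff_gt.1 (by rwa [htA _ hx₁, htA _ hx₂])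
  have hB : tB x₁ < tB x₂ := Phic_strictAnti.lt_iff_gt.1 (by
    rw [htB _ hx₁, htB _ hx₂]
    gcongr)
  obtain ⟨ξ, hξ, hφA⟩ := exists_phi_sub_eq_mul_Phic_sub hA
  obtain ⟨η, hη, hφB⟩ := exists_phi_sub_eq_mul_Phic_sub hB
  rw [htA _ hx₁, htA _ hx₂] at hφA
  rw [htB _ hx₁, htB _ hx₂] at hφB
  have hy : (1 - pA) * ((α₁ - pA * x₁) / (1 - pA) - (α₁ - pA * x₂) / (1 - pA))
      = pA * (x₂ - x₁) := by
    field_simp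
    ring
  have hξη : ξ / sA < η / sB := calc
    ξ / sA < tA x₁ / sA := by gcongr; exact hξ.2
    _ ≤ tB x₁ / sB := h
    _ < η / sB := by gcongr; exact hη.1
  have hN : pA * phi (tA x₁) / sA + (1 - pA) * phi (tB x₁) / sB
      - (pA * phi (tA x₂) / sA + (1 - pA) * phi (tB x₂) / sB)
      = pA * (x₂ - x₁) * (η / sB - ξ / sA) := by
    calc _ = -pA * (phi (tA x₂) - phi (tA x₁)) / sA
          + (1 - pA) * (phi (tB x₁) - phi (tB x₂)) / sB := by ring
      _ = pA * (x₂ - x₁) * (η / sB - ξ / sA) := by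
          rw [hφA, hφB, mul_left_comm (1 - pA), hy]
          ring
  linarith [mul_pos (mul_pos hpA₀ (sub_pos.2 h₁₂)) (sub_pos.2 hξη)]

lemma strictAntiOn_Nfun_of_lt_half (hhalf : α₁ < 1 / 2) (hσW : 0 < σW) (hσB : 0 ≤ σB)
    (hσAB : σB < σA) (hpA : pA ∈ Ioo 0 1) (hα : α₁ ∈ Ioo 0 1)
    (htA : ∀ x ∈ feas pA α₁, Phic (tA x) = x)
    (htB : ∀ x ∈ feas pA α₁, Phic (tB x) = (α₁ - pA * x) / (1 - pA)) :
    StrictAntiOn (Nfun σW σA σB pA tA tB) (feas pA α₁ ∩ Ico α₁ 1) := by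
  intro x₁ hx₁ x₂ hx₂ h₁₂
  have hα₁ := mem_feas_self hpA.2.ne hα
  have ht₀ : 0 < tA α₁ := Phic_strictAnti.lt_iff_gt.1 (by rw [htA _ hα₁, Phic_zero]; exact hhalf)
  have hA : tA x₁ ≤ tA α₁ :=
    Phic_strictAnti.le_iff_ge.1 (by rw [htA _ hx₁.1, htA _ hα₁]; exact hx₁.2.1)
  have hB : tA α₁ ≤ tB x₁ := Phic_strictAnti.le_iff_ge.1 (by
    rw [htB _ hx₁.1, htA _ hα₁]
    exact (div_one_sub_le_self_iff hpA).2 hx₁.2.1)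
  refine Nfun_lt_Nfun_of_div_le_div hσW hpA htA htB hx₁.1 hx₂.1 h₁₂ ?_
  calc tA x₁ / √(σW ^ 2 + σA ^ 2) ≤ tA α₁ / √(σW ^ 2 + σA ^ 2) := by gcongr
    _ ≤ tA α₁ / √(σW ^ 2 + σB ^ 2) :=
      div_le_div_of_nonneg_left ht₀.le (by positivity) (sqrt_add_sq_lt_sqrt_add_sq σW hσB hσAB).le
    _ ≤ tB x₁ / √(σW ^ 2 + σB ^ 2) := by gcongr

lemma exists_lt_Nfun_self_lt_of_lt_half (hhalf : α₁ < 1 / 2) (hσW : 0 < σW) (hσB : 0 ≤ σB)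
    (hσAB : σB < σA) (hpA : pA ∈ Ioo 0 1) (hα : α₁ ∈ Ioo 0 1)
    (htA : ∀ x ∈ feas pA α₁, Phic (tA x) = x)
    (htB : ∀ x ∈ feas pA α₁, Phic (tB x) = (α₁ - pA * x) / (1 - pA)) :
    ∃ x ∈ feas pA α₁, x < α₁ ∧ Nfun σW σA σB pA tA tB α₁ < Nfun σW σA σB pA tA tB x := by
  have hα₁ := mem_feas_self hpA.2.ne hα
  set t₀ := tA α₁
  have hPt₀ : Phic t₀ = α₁ := htA _ hα₁
  have ht₀ : 0 < t₀ := Phic_strictAnti.lt_iff_gt.1 (by rw [hPt₀, Phic_zero]; exact hhalf)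
  set sA := √(σW ^ 2 + σA ^ 2)
  set sB := √(σW ^ 2 + σB ^ 2)
  have hsA : 0 < sA := by positivity
  have hsB : 0 < sB := by positivity
  set r := sB / sA
  have hr : r * t₀ < t₀ :=
    mul_lt_of_lt_one_left ht₀ ((div_lt_one hsA).2 (sqrt_add_sq_lt_sqrt_add_sq σW hσB hσAB))
  -- At `t_A = t₀ + δ`, the criterion `t_A / s_A ≤ t_B / s_B` reads `r * (t₀ + δ) ≤ t_B`.
  have hev : ∀ᶠ δ in 𝓝 0, (α₁ - pA * Phic (t₀ + δ)) / (1 - pA) < Phic (r * (t₀ + δ)) := by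
    refine ContinuousAt.eventually_lt (by fun_prop) (by fun_prop) ?_
    simp only [add_zero, hPt₀, div_one_sub_self hpA.2.ne]
    exact hPt₀ ▸ Phic_strictAnti hr
  obtain ⟨δ, hδ, hlt⟩ := hev.exists_gt
  set x := Phic (t₀ + δ)
  have hxα : x < α₁ := hPt₀ ▸ Phic_strictAnti (lt_add_of_pos_right t₀ hδ)
  have hy : α₁ < (α₁ - pA * x) / (1 - pA) := (self_lt_div_one_sub_iff hpA).2 hxα
  have hx : x ∈ feas pA α₁ :=
    ⟨⟨Phic_pos _, hxα.trans hα.2⟩, hα.1.trans hy, hlt.trans (Phic_lt_one _)⟩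
  have htAx : tA x = t₀ + δ := Phic_strictAnti.injective (htA _ hx)
  have htBx : r * (t₀ + δ) < tB x := Phic_strictAnti.lt_iff_gt.1 (by rw [htB _ hx]; exact hlt)
  refine ⟨x, hx, hxα, Nfun_lt_Nfun_of_div_le_div hσW hpA htA htB hx hα₁ hxα ?_⟩
  calc tA x / sA = r * (t₀ + δ) / sB := by rw [htAx]; simp only [r]; field_simp
    _ ≤ tB x / sB := by gcongr

lemma lt_of_isMaxOn_Nfun_of_lt_half (hhalf : α₁ < 1 / 2) (hσW : 0 < σW) (hσB : 0 ≤ σB)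
    (hσAB : σB < σA) (hpA : pA ∈ Ioo 0 1) (hα : α₁ ∈ Ioo 0 1)
    (htA : ∀ x ∈ feas pA α₁, Phic (tA x) = x)
    (htB : ∀ x ∈ feas pA α₁, Phic (tB x) = (α₁ - pA * x) / (1 - pA))
    {x : ℝ} (hx : x ∈ feas pA α₁) (hmax : IsMaxOn (Nfun σW σA σB pA tA tB) (feas pA α₁) x) :
    x < α₁ := by
  have hα₁ := mem_feas_self hpA.2.ne hα
  by_contra! hαx
  obtain rfl | hlt := hαx.eq_or_lt
  · obtain ⟨y, hy, -, hNy⟩ :=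
      exists_lt_Nfun_self_lt_of_lt_half hhalf hσW hσB hσAB hpA hα htA htB
    exact (isMaxOn_iff.1 hmax y hy).not_gt hNy
  · exact (isMaxOn_iff.1 hmax α₁ hα₁).not_gt <| strictAntiOn_Nfun_of_lt_half hhalf hσW hσB hσAB
      hpA hα htA htB ⟨hα₁, le_rfl, hα.2⟩ ⟨hx, hαx, hx.1.2⟩ hlt

lemma one_sub_mem_feas_iff (hpA : pA ≠ 1) {x : ℝ} :
    1 - x ∈ feas pA (1 - α₁) ↔ x ∈ feas pA α₁ := by
  have : (1 - α₁ - pA * (1 - x)) / (1 - pA) = 1 - (α₁ - pA * x) / (1 - pA) := by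
    field_simp [sub_ne_zero.2 hpA.symm]
    ring
  simp only [feas, mem_ofPred_eq, mem_Ioo, this]
  constructor <;> rintro ⟨⟨h₁, h₂⟩, h₃, h₄⟩ <;>
    exact ⟨⟨by linarith, by linarith⟩, by linarith, by linarith⟩

lemma Phic_neg_comp_one_sub_eq (hpA : pA ≠ 1)
    (htA : ∀ x ∈ feas pA α₁, Phic (tA x) = x) :
    ∀ x ∈ feas pA (1 - α₁), Phic (-tA (1 - x)) = x := by
  intro x hx
  rw [Phic_neg, htA _ ((one_sub_mem_feas_iff hpA).1 (by rwa [sub_sub_cancel]))]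
  ring

lemma Phic_neg_comp_one_sub_eq_div (hpA : pA ≠ 1)
    (htB : ∀ x ∈ feas pA α₁, Phic (tB x) = (α₁ - pA * x) / (1 - pA)) :
    ∀ x ∈ feas pA (1 - α₁), Phic (-tB (1 - x)) = (1 - α₁ - pA * x) / (1 - pA) := by
  intro x hx
  rw [Phic_neg, htB _ ((one_sub_mem_feas_iff hpA).1 (by rwa [sub_sub_cancel]))]
  field_simp [sub_ne_zero.2 hpA.symm]
  ring

lemma Nfun_neg_comp_one_sub (x : ℝ) :
    Nfun σW σA σB pA (fun x => -tA (1 - x)) (fun x => -tB (1 - x)) x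
      = Nfun σW σA σB pA tA tB (1 - x) := by
  simp only [Nfun, phi_neg]

lemma strictMonoOn_Nfun_of_half_lt (hhalf : 1 / 2 < α₁) (hσW : 0 < σW) (hσB : 0 ≤ σB)
    (hσAB : σB < σA) (hpA : pA ∈ Ioo 0 1) (hα : α₁ ∈ Ioo 0 1)
    (htA : ∀ x ∈ feas pA α₁, Phic (tA x) = x)
    (htB : ∀ x ∈ feas pA α₁, Phic (tB x) = (α₁ - pA * x) / (1 - pA)) :
    StrictMonoOn (Nfun σW σA σB pA tA tB) (feas pA α₁ ∩ Ioc 0 α₁) := by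
  intro x₁ hx₁ x₂ hx₂ h₁₂
  have h := strictAntiOn_Nfun_of_lt_half (by linarith) hσW hσB hσAB hpA
    ⟨sub_pos.2 hα.2, sub_lt_self _ hα.1⟩ (Phic_neg_comp_one_sub_eq hpA.2.ne htA)
    (Phic_neg_comp_one_sub_eq_div hpA.2.ne htB)
    ⟨(one_sub_mem_feas_iff hpA.2.ne).2 hx₂.1, by linarith [hx₂.2.2], by linarith [hx₂.2.1]⟩
    ⟨(one_sub_mem_feas_iff hpA.2.ne).2 hx₁.1, by linarith [hx₁.2.2], by linarith [hx₁.2.1]⟩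
    (by linarith)
  simpa only [Nfun_neg_comp_one_sub, sub_sub_cancel] using h

lemma lt_of_isMaxOn_Nfun_of_half_lt (hhalf : 1 / 2 < α₁) (hσW : 0 < σW) (hσB : 0 ≤ σB)
    (hσAB : σB < σA) (hpA : pA ∈ Ioo 0 1) (hα : α₁ ∈ Ioo 0 1)
    (htA : ∀ x ∈ feas pA α₁, Phic (tA x) = x)
    (htB : ∀ x ∈ feas pA α₁, Phic (tB x) = (α₁ - pA * x) / (1 - pA))
    {x : ℝ} (hx : x ∈ feas pA α₁) (hmax : IsMaxOn (Nfun σW σA σB pA tA tB) (feas pA α₁) x) :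
    α₁ < x := by
  have hmax' : IsMaxOn (Nfun σW σA σB pA (fun x => -tA (1 - x)) (fun x => -tB (1 - x)))
      (feas pA (1 - α₁)) (1 - x) := isMaxOn_iff.2 fun y hy => by
    simp only [Nfun_neg_comp_one_sub, sub_sub_cancel]
    exact isMaxOn_iff.1 hmax _ ((one_sub_mem_feas_iff hpA.2.ne).1 (by rwa [sub_sub_cancel]))
  have h := lt_of_isMaxOn_Nfun_of_lt_half (by linarith) hσW hσB hσAB hpA
    ⟨sub_pos.2 hα.2, sub_lt_self _ hα.1⟩ (Phic_neg_comp_one_sub_eq hpA.2.ne htA)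
    (Phic_neg_comp_one_sub_eq_div hpA.2.ne htB) ((one_sub_mem_feas_iff hpA.2.ne).2 hx) hmax'
  linarith

end Model

theorem bayesian_optimal_location_one_stage_general
    (σW σA σB pA α₁ : ℝ) (tA tB : ℝ → ℝ)
    (hσW : 0 < σW) (hσB : 0 ≤ σB) (hσAB : σB < σA)
    (hpA : pA ∈ Set.Ioo (0 : ℝ) 1) (hα : α₁ ∈ Set.Ioo (0 : ℝ) 1)
    (htA : ∀ x ∈ feas pA α₁, Phic (tA x) = x)
    (htB : ∀ x ∈ feas pA α₁, Phic (tB x) = (α₁ - pA * x) / (1 - pA)) :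
    (α₁ < 1 / 2 →
      StrictAntiOn (Nfun σW σA σB pA tA tB) (feas pA α₁ ∩ Set.Ico α₁ 1) ∧
      ∀ x ∈ feas pA α₁,
        (∀ y ∈ feas pA α₁, Nfun σW σA σB pA tA tB y ≤ Nfun σW σA σB pA tA tB x) →
        x < α₁) ∧
    (1 / 2 < α₁ →
      StrictMonoOn (Nfun σW σA σB pA tA tB) (feas pA α₁ ∩ Set.Ioc 0 α₁) ∧
      ∀ x ∈ feas pA α₁,
        (∀ y ∈ feas pA α₁, Nfun σW σA σB pA tA tB y ≤ Nfun σW σA σB pA tA tB x) →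
        α₁ < x) :=
  ⟨fun h => ⟨strictAntiOn_Nfun_of_lt_half h hσW hσB hσAB hpA hα htA htB, fun _ hx hmax =>
      lt_of_isMaxOn_Nfun_of_lt_half h hσW hσB hσAB hpA hα htA htB hx (isMaxOn_iff.2 hmax)⟩,
    fun h => ⟨strictMonoOn_Nfun_of_half_lt h hσW hσB hσAB hpA hα htA htB, fun _ hx hmax =>
      lt_of_isMaxOn_Nfun_of_half_lt h hσW hσB hσAB hpA hα htA htB hx (isMaxOn_iff.2 hmax)⟩⟩

/-- Location of the Bayesian-optimal one-stage selection fraction relative to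
demographic parity: for `α₁ < 1/2`, `N` is strictly decreasing on `X ∩ [α₁, 1)`
and every maximizer of `N` over `X` is `< α₁`; for `α₁ > 1/2`, `N` is strictly
increasing on `X ∩ (0, α₁]` and every maximizer of `N` over `X` is `> α₁`. -/
theorem bayesian_optimal_location_one_stage
    (μ σW σA σB pA α₁ : ℝ) (tA tB : ℝ → ℝ)
    (hσW : 0 < σW) (hσB : 0 ≤ σB) (hσAB : σB < σA)
    (hpA : pA ∈ Set.Ioo (0 : ℝ) 1) (hα : α₁ ∈ Set.Ioo (0 : ℝ) 1)
    (htA : ∀ x ∈ feas pA α₁, Phic (tA x) = x)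
    (htB : ∀ x ∈ feas pA α₁, Phic (tB x) = (α₁ - pA * x) / (1 - pA)) :
    (α₁ < 1 / 2 →
      StrictAntiOn (Nfun σW σA σB pA tA tB) (feas pA α₁ ∩ Set.Ico α₁ 1) ∧
      ∀ x ∈ feas pA α₁,
        (∀ y ∈ feas pA α₁, Nfun σW σA σB pA tA tB y ≤ Nfun σW σA σB pA tA tB x) →
        x < α₁) ∧
    (1 / 2 < α₁ →
      StrictMonoOn (Nfun σW σA σB pA tA tB) (feas pA α₁ ∩ Set.Ioc 0 α₁) ∧
      ∀ x ∈ feas pA α₁,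
        (∀ y ∈ feas pA α₁, Nfun σW σA σB pA tA tB y ≤ Nfun σW σA σB pA tA tB x) →
        α₁ < x) :=
  bayesian_optimal_location_one_stage_general σW σA σB pA α₁ tA tB hσW hσB hσAB hpA hα htA htB
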